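/- Let the filtering distribution be approximated exactly by a weighted empirical measure p(j_{t-1}|d_{1:t-1}) = ∑_k w_{t-1}^k δ(j_{t-1}, j_{t-1}^k) and the backward filter by p̃(j_t|d_{t:T}) = ∑_l w̃_t^l δ(j_t, j̃_t^l), with distinct atoms. Then the normalized measure with atoms j̃_t^l and weights proportional to w̃_t^l ∑_k w_{t-1}^k p(j̃_t^l|j_{t-1}^k)/γ_t(j̃_t^l) equals the smoothing distribution p(j_t|d_{1:T}) restricted to those atoms, whenever the filtering and backward approximations are exact on a finite state space. -/
import Mathlib


open Finset MeasureTheory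
open scoped BigOperators Classical

noncomputable section

/-- Joint density of a finite-state hidden Markov model with horizon `T+1`:
`p(j_{1:T}, d_{1:T}) = p(j_1) ∏_t p(j_{t+1}|j_t) ∏_t p(d_t|j_t)`. -/
def hmmJoint {S O : Type} [Fintype S] [Fintype O] (T : ℕ)
    (init : S → ℝ) (trans : S → S → ℝ) (emit : S → O → ℝ)
    (js : Fin (T + 1) → S) (ds : Fin (T + 1) → O) : ℝ :=
  init (js 0) * (∏ t : Fin T, trans (js t.castSucc) (js t.succ)) *
    ∏ t : Fin (T + 1), emit (js t) (ds t)

/-- Probability of an event under the HMM joint law. -/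
def hmmProb {S O : Type} [Fintype S] [Fintype O] (T : ℕ)
    (init : S → ℝ) (trans : S → S → ℝ) (emit : S → O → ℝ)
    (E : (Fin (T + 1) → S) → (Fin (T + 1) → O) → Prop) : ℝ :=
  ∑ js : Fin (T + 1) → S, ∑ ds : Fin (T + 1) → O,
    if E js ds then hmmJoint T init trans emit js ds else 0

/-- Conditional probability `P(A | B)` as a ratio of joint probabilities. -/
def hmmCond {S O : Type} [Fintype S] [Fintype O] (T : ℕ)
    (init : S → ℝ) (trans : S → S → ℝ) (emit : S → O → ℝ)
    (A B : (Fin (T + 1) → S) → (Fin (T + 1) → O) → Prop) : ℝ :=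
  hmmProb T init trans emit (fun js ds => A js ds ∧ B js ds) /
    hmmProb T init trans emit B

/-- Event: the observations strictly before time `t` equal `d`. -/
def obsLt {S O : Type} (T : ℕ) (t : Fin (T + 1)) (d : Fin (T + 1) → O) :
    (Fin (T + 1) → S) → (Fin (T + 1) → O) → Prop :=
  fun _ ds => ∀ i, i < t → ds i = d i

/-- Event: the observations up to (and including) time `t` equal `d`. -/
def obsLe {S O : Type} (T : ℕ) (t : Fin (T + 1)) (d : Fin (T + 1) → O) :
    (Fin (T + 1) → S) → (Fin (T + 1) → O) → Prop :=
  fun _ ds => ∀ i, i ≤ t → ds i = d i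

/-- Event: the observations from time `t` on equal `d`. -/
def obsGe {S O : Type} (T : ℕ) (t : Fin (T + 1)) (d : Fin (T + 1) → O) :
    (Fin (T + 1) → S) → (Fin (T + 1) → O) → Prop :=
  fun _ ds => ∀ i, t ≤ i → ds i = d i

/-- Event: the observations strictly after time `t` equal `d`. -/
def obsGt {S O : Type} (T : ℕ) (t : Fin (T + 1)) (d : Fin (T + 1) → O) :
    (Fin (T + 1) → S) → (Fin (T + 1) → O) → Prop :=
  fun _ ds => ∀ i, t < i → ds i = d i

/-- Event: the whole observation sequence equals `d`. -/
def obsAll {S O : Type} (T : ℕ) (d : Fin (T + 1) → O) :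
    (Fin (T + 1) → S) → (Fin (T + 1) → O) → Prop :=
  fun _ ds => ∀ i, ds i = d i

/-- Event: the hidden state at time `t` equals `x`. -/
def stateAt {S O : Type} (T : ℕ) (t : Fin (T + 1)) (x : S) :
    (Fin (T + 1) → S) → (Fin (T + 1) → O) → Prop :=
  fun js _ => js t = x

/-- Backward information filter `p(d_{t:T} | j_t = x)`. -/
def backF {S O : Type} [Fintype S] [Fintype O] (T : ℕ)
    (init : S → ℝ) (trans : S → S → ℝ) (emit : S → O → ℝ)
    (d : Fin (T + 1) → O) (t : Fin (T + 1)) (x : S) : ℝ :=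
  hmmCond T init trans emit (obsGe T t d) (stateAt T t x)

/-- Backward predictive likelihood `p(d_{t+1:T} | j_t = x)`. -/
def backFGt {S O : Type} [Fintype S] [Fintype O] (T : ℕ)
    (init : S → ℝ) (trans : S → S → ℝ) (emit : S → O → ℝ)
    (d : Fin (T + 1) → O) (t : Fin (T + 1)) (x : S) : ℝ :=
  hmmCond T init trans emit (obsGt T t d) (stateAt T t x)

/-- Auxiliary probability distribution `p̃(j_t|d_{t:T}) ∝ p(d_{t:T}|j_t) γ_t(j_t)`. -/
def ptilde {S O : Type} [Fintype S] [Fintype O] (T : ℕ)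
    (init : S → ℝ) (trans : S → S → ℝ) (emit : S → O → ℝ)
    (γ : Fin (T + 1) → S → ℝ) (d : Fin (T + 1) → O) (t : Fin (T + 1)) (x : S) : ℝ :=
  backF T init trans emit d t x * γ t x /
    ∑ y : S, backF T init trans emit d t y * γ t y

/-- Auxiliary probability distribution `p̃(j_t|d_{t+1:T}) ∝ p(d_{t+1:T}|j_t) γ_t(j_t)`. -/
def ptildeGt {S O : Type} [Fintype S] [Fintype O] (T : ℕ)
    (init : S → ℝ) (trans : S → S → ℝ) (emit : S → O → ℝ)
    (γ : Fin (T + 1) → S → ℝ) (d : Fin (T + 1) → O) (t : Fin (T + 1)) (x : S) : ℝ :=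
  backFGt T init trans emit d t x * γ t x /
    ∑ y : S, backFGt T init trans emit d t y * γ t y


/-! ### Auxiliary machinery for the two-filter smoother -/

set_option linter.unusedSectionVars false

namespace TFAux

variable {S O : Type} [Fintype S] [Fintype O] {T : ℕ}

/-- Swapping the pinned value of one coordinate leaves the sum unchanged
when the integrand ignores that coordinate. -/
lemma pin_swap {n : ℕ} (c : Fin n) (F : (Fin n → S) → ℝ)
    (hF : ∀ js z, F (Function.update js c z) = F js) (z z' : S) :
    ∑ js : Fin n → S, (if js c = z then F js else 0)
      = ∑ js : Fin n → S, (if js c = z' then F js else 0) := by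
  classical
  set τ : (Fin n → S) → (Fin n → S) :=
    fun js => Function.update js c (Equiv.swap z z' (js c)) with hτ
  have hinv : Function.Involutive τ := by
    intro js
    funext i
    by_cases h : i = c
    · subst h; simp [hτ, Function.update_self]
    · simp [hτ, Function.update_of_ne h]
  refine Fintype.sum_bijective τ hinv.bijective _ _ ?_
  intro js
  have h1 : τ js c = Equiv.swap z z' (js c) := by simp [hτ]
  have h2 : F (τ js) = F js := hF _ _
  rw [h2, h1]
  by_cases h : js c = z
  · simp [h]
  · rw [if_neg h, eq_comm]
    rw [if_neg]
    intro hc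
    exact h ((Equiv.swap z z').injective (by rw [hc]; simp))

/-- Summing a coordinate-`c`-independent integrand over the fiber `js c = z`
gives `1/card S` of the full sum. -/
lemma pin_sum_card {n : ℕ} (c : Fin n) (F : (Fin n → S) → ℝ)
    (hF : ∀ js z, F (Function.update js c z) = F js) (z : S) :
    (Fintype.card S : ℝ) * ∑ js : Fin n → S, (if js c = z then F js else 0)
      = ∑ js : Fin n → S, F js := by
  have h1 : ∑ js : Fin n → S, F js
      = ∑ z' : S, ∑ js : Fin n → S, (if js c = z' then F js else 0) := by
    rw [Finset.sum_comm]
    refine Finset.sum_congr rfl fun js _ => ?_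
    rw [Finset.sum_ite_eq univ (js c) (fun _ => F js)]
    simp
  rw [h1]
  have h2 : ∀ z' : S, ∑ js : Fin n → S, (if js c = z' then F js else 0)
      = ∑ js : Fin n → S, (if js c = z then F js else 0) :=
    fun z' => pin_swap c F hF z' z
  rw [Finset.sum_congr rfl (fun z' _ => h2 z'), Finset.sum_const, card_univ,
    nsmul_eq_mul]

lemma sum_one_pi {n : ℕ} :
    ∑ _js : Fin n → S, (1 : ℝ) = (Fintype.card S : ℝ) ^ n := by
  rw [Finset.sum_const, card_univ, nsmul_eq_mul, mul_one]
  norm_cast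
  rw [Fintype.card_fun]
  simp

/-- Splitting a pinned path sum of a product of a past-measurable and a
future-measurable functional into a product of two sums. -/
lemma split_pin {n : ℕ} (c : Fin n) (x : S) (f g : (Fin n → S) → ℝ)
    (hf : ∀ js js' : Fin n → S, (∀ i : Fin n, (i : ℕ) ≤ (c : ℕ) → js i = js' i) → f js = f js')
    (hg : ∀ js js' : Fin n → S, (∀ i : Fin n, (c : ℕ) ≤ (i : ℕ) → js i = js' i) → g js = g js') :
    ∑ js : Fin n → S, (if js c = x then f js * g js else 0)
      = (∑ u : {i : Fin n // (i : ℕ) < (c : ℕ)} → S,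
            f (fun i => if h : (i : ℕ) < (c : ℕ) then u ⟨i, h⟩ else x))
        * ∑ v : {i : Fin n // ¬ (i : ℕ) < (c : ℕ)} → S,
            (if v ⟨c, lt_irrefl _⟩ = x
              then g (fun i => if h : (i : ℕ) < (c : ℕ) then x else v ⟨i, h⟩) else 0) := by
  classical
  set e := (Equiv.piEquivPiSubtypeProd (fun i : Fin n => (i : ℕ) < (c : ℕ)) (fun _ => S)).symm
    with he
  rw [← Equiv.sum_comp e (fun js => if js c = x then f js * g js else 0)]
  rw [Fintype.sum_prod_type]
  rw [Finset.sum_mul_sum]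
  refine Finset.sum_congr rfl fun u _ => Finset.sum_congr rfl fun v _ => ?_
  have hc : e (u, v) c = v ⟨c, lt_irrefl _⟩ := by
    simp [he, Equiv.piEquivPiSubtypeProd_symm_apply]
  rw [hc]
  by_cases hvx : v ⟨c, lt_irrefl _⟩ = x
  · rw [if_pos hvx, if_pos hvx]
    have hfe : f (e (u, v)) = f (fun i => if h : (i : ℕ) < (c : ℕ) then u ⟨i, h⟩ else x) := by
      apply hf
      intro i hi
      simp only [he, Equiv.piEquivPiSubtypeProd_symm_apply]
      by_cases h : (i : ℕ) < (c : ℕ)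
      · simp [h]
      · have : i = c := Fin.ext (le_antisymm hi (not_lt.mp h))
        subst this
        simp [h, hvx]
    have hge : g (e (u, v)) = g (fun i => if h : (i : ℕ) < (c : ℕ) then x else v ⟨i, h⟩) := by
      apply hg
      intro i hi
      have h : ¬ (i : ℕ) < (c : ℕ) := not_lt.mpr hi
      simp [he, Equiv.piEquivPiSubtypeProd_symm_apply, h]
    rw [hfe, hge]
  · rw [if_neg hvx, if_neg hvx, mul_zero]

lemma split_pin4 {n : ℕ} (c : Fin n) (x : S) (f f' g g' : (Fin n → S) → ℝ)
    (hf : ∀ js js' : Fin n → S, (∀ i : Fin n, (i : ℕ) ≤ (c : ℕ) → js i = js' i) → f js = f js')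
    (hf' : ∀ js js' : Fin n → S, (∀ i : Fin n, (i : ℕ) ≤ (c : ℕ) → js i = js' i) → f' js = f' js')
    (hg : ∀ js js' : Fin n → S, (∀ i : Fin n, (c : ℕ) ≤ (i : ℕ) → js i = js' i) → g js = g js')
    (hg' : ∀ js js' : Fin n → S, (∀ i : Fin n, (c : ℕ) ≤ (i : ℕ) → js i = js' i) → g' js = g' js') :
    (∑ js : Fin n → S, (if js c = x then f js * g js else 0))
      * (∑ js : Fin n → S, (if js c = x then f' js * g' js else 0))
    = (∑ js : Fin n → S, (if js c = x then f js * g' js else 0))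
      * (∑ js : Fin n → S, (if js c = x then f' js * g js else 0)) := by
  rw [split_pin c x f g hf hg, split_pin c x f' g' hf' hg',
    split_pin c x f g' hf hg', split_pin c x f' g hf' hg]
  ring

variable (init : S → ℝ) (trans : S → S → ℝ) (emit : S → O → ℝ) (d : Fin (T + 1) → O)

/-- Mass of the future transition product pinned at time `m`. -/
lemma tel [Nonempty S] (htrans1 : ∀ s : S, ∑ s' : S, trans s s' = 1) :
    ∀ (k m : ℕ) (hmk : m + k = T) (y : S),
    ∑ js : Fin (T + 1) → S,
      (if js ⟨m, by omega⟩ = y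
        then ∏ i : Fin T, (if m ≤ (i : ℕ) then trans (js i.castSucc) (js i.succ) else 1)
        else 0)
      = (Fintype.card S : ℝ) ^ m := by
  have hcard : (Fintype.card S : ℝ) ≠ 0 := by
    simp [Fintype.card_ne_zero]
  intro k
  induction k with
  | zero =>
    intro m hmk y
    have hm : m = T := by omega
    have hstep : ∀ js : Fin (T + 1) → S,
        (if js ⟨m, by omega⟩ = y
          then ∏ i : Fin T, (if m ≤ (i : ℕ) then trans (js i.castSucc) (js i.succ) else 1)
          else 0)
        = (if js ⟨m, by omega⟩ = y then (1 : ℝ) else 0) := by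
      intro js
      by_cases h : js ⟨m, by omega⟩ = y
      · rw [if_pos h, if_pos h]
        refine Finset.prod_eq_one fun i _ => ?_
        rw [if_neg (by omega)]
      · rw [if_neg h, if_neg h]
    rw [Finset.sum_congr rfl fun js _ => hstep js]
    have h1 := pin_sum_card (S := S) (⟨m, by omega⟩ : Fin (T + 1)) (fun _ => (1 : ℝ))
      (fun _ _ => rfl) y
    rw [sum_one_pi] at h1
    have h2 : (Fintype.card S : ℝ) ^ (T + 1) = (Fintype.card S : ℝ) * (Fintype.card S : ℝ) ^ m := by
      rw [hm]; ring
    rw [h2] at h1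
    exact mul_left_cancel₀ hcard h1
  | succ k ih =>
    intro m hmk y
    have hmT : m < T := by omega
    have ihm := ih (m + 1) (by omega)
    set cm : Fin (T + 1) := ⟨m, by omega⟩ with hcm
    set cm1 : Fin (T + 1) := ⟨m + 1, by omega⟩ with hcm1
    set im : Fin T := ⟨m, hmT⟩ with him
    set R : (Fin (T + 1) → S) → ℝ :=
      fun js => ∏ i : Fin T, (if m + 1 ≤ (i : ℕ) then trans (js i.castSucc) (js i.succ) else 1)
      with hR
    have hprodsplit : ∀ js : Fin (T + 1) → S,
        (∏ i : Fin T, (if m ≤ (i : ℕ) then trans (js i.castSucc) (js i.succ) else 1))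
          = trans (js cm) (js cm1) * R js := by
      intro js
      rw [← Finset.mul_prod_erase univ _ (Finset.mem_univ im)]
      have h1 : (if m ≤ (im : ℕ) then trans (js im.castSucc) (js im.succ) else 1)
          = trans (js cm) (js cm1) := by
        rw [if_pos (by simp [him])]
        congr 1
      rw [h1]
      have e1 : R js = ∏ x ∈ univ.erase im,
          (if m + 1 ≤ (x : ℕ) then trans (js x.castSucc) (js x.succ) else 1) :=
        (Finset.prod_erase univ (f := fun i : Fin T =>
          (if m + 1 ≤ (i : ℕ) then trans (js i.castSucc) (js i.succ) else 1))
          (by simp [him])).symm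
      rw [e1]
      congr 1
      refine Finset.prod_congr rfl fun i hi => ?_
      have : (i : ℕ) ≠ m := by
        intro hc
        exact (Finset.mem_erase.mp hi).1 (Fin.ext (by simp [him, hc]))
      by_cases h : m + 1 ≤ (i : ℕ)
      · rw [if_pos h, if_pos (by omega)]
      · rw [if_neg h, if_neg (by omega)]
    have hsummand : ∀ js : Fin (T + 1) → S,
        (if js cm = y
          then ∏ i : Fin T, (if m ≤ (i : ℕ) then trans (js i.castSucc) (js i.succ) else 1)
          else 0)
        = ∑ z : S, (if js cm = y then (if js cm1 = z then trans y z * R js else 0) else 0) := by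
      intro js
      by_cases h : js cm = y
      · simp only [if_pos h]
        rw [Finset.sum_ite_eq univ (js cm1) (fun z => trans y z * R js)]
        rw [if_pos (Finset.mem_univ _), hprodsplit js, h]
      · simp [h]
    rw [Finset.sum_congr rfl fun js _ => hsummand js, Finset.sum_comm]
    have hinner : ∀ z : S,
        ∑ js : Fin (T + 1) → S,
          (if js cm = y then (if js cm1 = z then trans y z * R js else 0) else 0)
        = trans y z * (Fintype.card S : ℝ) ^ m := by
      intro z
      have hpull : ∀ js : Fin (T + 1) → S,
          (if js cm = y then (if js cm1 = z then trans y z * R js else 0) else 0)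
          = trans y z * (if js cm = y then (if js cm1 = z then R js else 0) else 0) := by
        intro js
        by_cases h1 : js cm = y <;> by_cases h2 : js cm1 = z <;> simp [h1, h2]
      rw [Finset.sum_congr rfl fun js _ => hpull js, ← Finset.mul_sum]
      congr 1
      set F : (Fin (T + 1) → S) → ℝ :=
        fun js => (if js cm1 = z then R js else 0) with hF
      have hFind : ∀ (js : Fin (T + 1) → S) (w : S), F (Function.update js cm w) = F js := by
        intro js w
        have hne : cm1 ≠ cm := by
          intro hc
          have := congrArg Fin.val hc
          simp [hcm, hcm1] at this
        have h1 : Function.update js cm w cm1 = js cm1 := Function.update_of_ne hne _ _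
        have h2 : R (Function.update js cm w) = R js := by
          rw [hR]
          refine Finset.prod_congr rfl fun i _ => ?_
          by_cases h : m + 1 ≤ (i : ℕ)
          · rw [if_pos h, if_pos h,
              Function.update_of_ne (by intro hc; have := congrArg Fin.val hc; simp [hcm] at this; omega) _ _,
              Function.update_of_ne (by intro hc; have := congrArg Fin.val hc; simp [hcm, Fin.val_succ] at this; omega) _ _]
          · rw [if_neg h, if_neg h]
        rw [hF]
        simp only [h1, h2]
      have hcardeq := pin_sum_card cm F hFind y
      have hval : ∑ js : Fin (T + 1) → S, F js = (Fintype.card S : ℝ) ^ (m + 1) := ihm z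
      rw [hval] at hcardeq
      have hpm : (Fintype.card S : ℝ) ^ (m + 1)
          = (Fintype.card S : ℝ) * (Fintype.card S : ℝ) ^ m := by ring
      rw [hpm] at hcardeq
      exact mul_left_cancel₀ hcard hcardeq
    rw [Finset.sum_congr rfl fun z _ => hinner z, ← Finset.sum_mul, htrans1 y, one_mul]

lemma hmmProb_congr {E E' : (Fin (T + 1) → S) → (Fin (T + 1) → O) → Prop}
    (h : ∀ js ds, E js ds ↔ E' js ds) :
    hmmProb T init trans emit E = hmmProb T init trans emit E' := by
  unfold hmmProb
  refine Finset.sum_congr rfl fun js _ => Finset.sum_congr rfl fun ds _ => ?_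
  rw [if_congr (h js ds) rfl rfl]

lemma hmmProb_state_partition (c : Fin (T + 1))
    (B : (Fin (T + 1) → S) → (Fin (T + 1) → O) → Prop) :
    ∑ y : S, hmmProb T init trans emit (fun js ds => js c = y ∧ B js ds)
      = hmmProb T init trans emit B := by
  unfold hmmProb
  rw [Finset.sum_comm]
  refine Finset.sum_congr rfl fun js _ => ?_
  rw [Finset.sum_comm]
  refine Finset.sum_congr rfl fun ds _ => ?_
  by_cases hB : B js ds
  · simp only [hB, and_true]
    rw [Finset.sum_ite_eq univ (js c) (fun _ => hmmJoint T init trans emit js ds)]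
    simp
  · simp [hB]

/-- Marginalizing the observations. -/
lemma prob_eq_pathSum (hemit1 : ∀ s, ∑ o : O, emit s o = 1)
    (C : (Fin (T + 1) → S) → Prop) (q : Fin (T + 1) → Prop) :
    hmmProb T init trans emit (fun js ds => C js ∧ ∀ i, q i → ds i = d i)
      = ∑ js : Fin (T + 1) → S,
          (if C js
            then (init (js 0) * ∏ i : Fin T, trans (js i.castSucc) (js i.succ))
              * ∏ i : Fin (T + 1), (if q i then emit (js i) (d i) else 1)
            else 0) := by
  unfold hmmProb
  refine Finset.sum_congr rfl fun js _ => ?_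
  by_cases hC : C js
  · simp only [hC, true_and, if_true]
    have hpt : ∀ ds : Fin (T + 1) → O,
        (if (∀ i, q i → ds i = d i) then hmmJoint T init trans emit js ds else 0)
          = (init (js 0) * ∏ i : Fin T, trans (js i.castSucc) (js i.succ))
            * ∏ i : Fin (T + 1),
                (if q i then (if ds i = d i then emit (js i) (ds i) else 0)
                  else emit (js i) (ds i)) := by
      intro ds
      by_cases h : ∀ i, q i → ds i = d i
      · rw [if_pos h]
        unfold hmmJoint
        congr 1
        refine Finset.prod_congr rfl fun i _ => ?_
        by_cases hq : q i
        · rw [if_pos hq, if_pos (h i hq)]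
        · rw [if_neg hq]
      · rw [if_neg h, eq_comm, mul_eq_zero]
        right
        push_neg at h
        obtain ⟨i, hqi, hne⟩ := h
        refine Finset.prod_eq_zero (Finset.mem_univ i) ?_
        rw [if_pos hqi, if_neg hne]
    rw [Finset.sum_congr rfl fun ds _ => hpt ds, ← Finset.mul_sum]
    congr 1
    rw [← Fintype.prod_sum (fun (i : Fin (T + 1)) (o : O) =>
      (if q i then (if o = d i then emit (js i) o else 0) else emit (js i) o))]
    refine Finset.prod_congr rfl fun i _ => ?_
    by_cases hq : q i
    · simp only [if_pos hq]
      rw [Finset.sum_ite_eq' univ (d i) (fun o => emit (js i) o)]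
      simp
    · simp only [if_neg hq]
      exact hemit1 _
  · simp [hC]

/-- initial density times the transitions strictly inside `[0, m]`. -/
def pastW (m : ℕ) (js : Fin (T + 1) → S) : ℝ :=
  init (js 0) * ∏ i : Fin T, (if (i : ℕ) + 1 ≤ m then trans (js i.castSucc) (js i.succ) else 1)

/-- transitions inside `[m, T]`. -/
def futW (m : ℕ) (js : Fin (T + 1) → S) : ℝ :=
  ∏ i : Fin T, (if m ≤ (i : ℕ) then trans (js i.castSucc) (js i.succ) else 1)

/-- emissions strictly before `m`. -/
def pastE (m : ℕ) (js : Fin (T + 1) → S) : ℝ :=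
  ∏ i : Fin (T + 1), (if (i : ℕ) < m then emit (js i) (d i) else 1)

/-- emissions from `m` on. -/
def futE (m : ℕ) (js : Fin (T + 1) → S) : ℝ :=
  ∏ i : Fin (T + 1), (if m ≤ (i : ℕ) then emit (js i) (d i) else 1)

lemma W_split (m : ℕ) (js : Fin (T + 1) → S) :
    init (js 0) * ∏ i : Fin T, trans (js i.castSucc) (js i.succ)
      = pastW init trans m js * futW trans m js := by
  unfold pastW futW
  rw [mul_assoc, ← Finset.prod_mul_distrib]
  congr 1
  refine Finset.prod_congr rfl fun i _ => ?_
  by_cases h : (i : ℕ) + 1 ≤ m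
  · rw [if_pos h, if_neg (by omega), mul_one]
  · rw [if_neg h, if_pos (by omega), one_mul]

lemma E_split (m : ℕ) (js : Fin (T + 1) → S) :
    pastE emit d m js * futE emit d m js = ∏ i : Fin (T + 1), emit (js i) (d i) := by
  unfold pastE futE
  rw [← Finset.prod_mul_distrib]
  refine Finset.prod_congr rfl fun i _ => ?_
  by_cases h : (i : ℕ) < m
  · rw [if_pos h, if_neg (by omega), mul_one]
  · rw [if_neg h, if_pos (by omega), one_mul]

lemma pastW_succ (m : ℕ) (hm : m < T) (js : Fin (T + 1) → S) :
    pastW init trans (m + 1) js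
      = pastW init trans m js * trans (js ⟨m, by omega⟩) (js ⟨m + 1, by omega⟩) := by
  unfold pastW
  rw [mul_assoc]
  congr 1
  rw [← Finset.mul_prod_erase univ _ (Finset.mem_univ (⟨m, hm⟩ : Fin T))]
  have h1 : (if (m : ℕ) + 1 ≤ m + 1
      then trans (js (⟨m, hm⟩ : Fin T).castSucc) (js (⟨m, hm⟩ : Fin T).succ) else 1)
      = trans (js ⟨m, by omega⟩) (js ⟨m + 1, by omega⟩) := by
    rw [if_pos (by omega)]
    congr 1
  rw [h1, mul_comm]
  congr 1
  rw [← Finset.prod_erase univ (f := fun i : Fin T =>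
      (if (i : ℕ) + 1 ≤ m then trans (js i.castSucc) (js i.succ) else 1))
      (a := (⟨m, hm⟩ : Fin T)) (by simp)]
  refine Finset.prod_congr rfl fun i hi => ?_
  have hne : (i : ℕ) ≠ m := by
    intro hc
    exact (Finset.mem_erase.mp hi).1 (Fin.ext (by simpa using hc))
  by_cases h : (i : ℕ) + 1 ≤ m
  · rw [if_pos h, if_pos (by omega)]
  · rw [if_neg h, if_neg (by omega)]

lemma futW_split (m : ℕ) (hm : m < T) (js : Fin (T + 1) → S) :
    futW trans m js
      = trans (js ⟨m, by omega⟩) (js ⟨m + 1, by omega⟩) * futW trans (m + 1) js := by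
  unfold futW
  rw [← Finset.mul_prod_erase univ _ (Finset.mem_univ (⟨m, hm⟩ : Fin T))]
  have h1 : (if m ≤ ((⟨m, hm⟩ : Fin T) : ℕ)
      then trans (js (⟨m, hm⟩ : Fin T).castSucc) (js (⟨m, hm⟩ : Fin T).succ) else 1)
      = trans (js ⟨m, by omega⟩) (js ⟨m + 1, by omega⟩) := by
    rw [if_pos (by simp)]
    congr 1
  rw [h1]
  congr 1
  rw [← Finset.prod_erase univ (f := fun i : Fin T =>
      (if m + 1 ≤ (i : ℕ) then trans (js i.castSucc) (js i.succ) else 1))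
      (a := (⟨m, hm⟩ : Fin T)) (by simp)]
  refine Finset.prod_congr rfl fun i hi => ?_
  have hne : (i : ℕ) ≠ m := by
    intro hc
    exact (Finset.mem_erase.mp hi).1 (Fin.ext (by simpa using hc))
  by_cases h : m + 1 ≤ (i : ℕ)
  · rw [if_pos h, if_pos (by omega)]
  · rw [if_neg h, if_neg (by omega)]

lemma pastW_meas (m M : ℕ) (hmM : m ≤ M) (js js' : Fin (T + 1) → S)
    (h : ∀ i : Fin (T + 1), (i : ℕ) ≤ M → js i = js' i) :
    pastW init trans m js = pastW init trans m js' := by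
  unfold pastW
  rw [h 0 (by simp)]
  congr 1
  refine Finset.prod_congr rfl fun i _ => ?_
  by_cases hc : (i : ℕ) + 1 ≤ m
  · rw [if_pos hc, if_pos hc, h i.castSucc (by simp; omega), h i.succ (by simp [Fin.val_succ]; omega)]
  · rw [if_neg hc, if_neg hc]

lemma pastE_meas (m M : ℕ) (hmM : m ≤ M + 1) (js js' : Fin (T + 1) → S)
    (h : ∀ i : Fin (T + 1), (i : ℕ) ≤ M → js i = js' i) :
    pastE emit d m js = pastE emit d m js' := by
  unfold pastE
  refine Finset.prod_congr rfl fun i _ => ?_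
  by_cases hc : (i : ℕ) < m
  · rw [if_pos hc, if_pos hc, h i (by omega)]
  · rw [if_neg hc, if_neg hc]

lemma futW_meas (m M : ℕ) (hMm : M ≤ m) (js js' : Fin (T + 1) → S)
    (h : ∀ i : Fin (T + 1), M ≤ (i : ℕ) → js i = js' i) :
    futW trans m js = futW trans m js' := by
  unfold futW
  refine Finset.prod_congr rfl fun i _ => ?_
  by_cases hc : m ≤ (i : ℕ)
  · rw [if_pos hc, if_pos hc, h i.castSucc (by simp; omega), h i.succ (by simp [Fin.val_succ]; omega)]
  · rw [if_neg hc, if_neg hc]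

lemma futE_meas (m M : ℕ) (hMm : M ≤ m) (js js' : Fin (T + 1) → S)
    (h : ∀ i : Fin (T + 1), M ≤ (i : ℕ) → js i = js' i) :
    futE emit d m js = futE emit d m js' := by
  unfold futE
  refine Finset.prod_congr rfl fun i _ => ?_
  by_cases hc : m ≤ (i : ℕ)
  · rw [if_pos hc, if_pos hc, h i (by omega)]
  · rw [if_neg hc, if_neg hc]

end TFAux


namespace TFBridge

open TFAux

variable {S O : Type} [Fintype S] [Fintype O] {T : ℕ}

/-- The smoothing numerator as a pinned path sum. -/
def NumQ (init : S → ℝ) (trans : S → S → ℝ) (emit : S → O → ℝ)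
    (d : Fin (T + 1) → O) (t : Fin T) (x : S) : ℝ :=
  ∑ js : Fin (T + 1) → S,
    (if js t.succ = x
      then (pastW init trans ((t : ℕ) + 1) js * pastE emit d ((t : ℕ) + 1) js)
        * (futW trans ((t : ℕ) + 1) js * futE emit d ((t : ℕ) + 1) js)
      else 0)

def MstQ (init : S → ℝ) (trans : S → S → ℝ) (t : Fin T) (x : S) : ℝ :=
  ∑ js : Fin (T + 1) → S,
    (if js t.succ = x
      then pastW init trans ((t : ℕ) + 1) js * futW trans ((t : ℕ) + 1) js
      else 0)

def PpastQ (init : S → ℝ) (trans : S → S → ℝ) (emit : S → O → ℝ)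
    (d : Fin (T + 1) → O) (t : Fin T) (x : S) : ℝ :=
  ∑ js : Fin (T + 1) → S,
    (if js t.succ = x
      then (pastW init trans ((t : ℕ) + 1) js * pastE emit d ((t : ℕ) + 1) js)
        * futW trans ((t : ℕ) + 1) js
      else 0)

def PfutQ (init : S → ℝ) (trans : S → S → ℝ) (emit : S → O → ℝ)
    (d : Fin (T + 1) → O) (t : Fin T) (x : S) : ℝ :=
  ∑ js : Fin (T + 1) → S,
    (if js t.succ = x
      then pastW init trans ((t : ℕ) + 1) js
        * (futW trans ((t : ℕ) + 1) js * futE emit d ((t : ℕ) + 1) js)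
      else 0)

def FprevQ (init : S → ℝ) (trans : S → S → ℝ) (emit : S → O → ℝ)
    (d : Fin (T + 1) → O) (t : Fin T) (y : S) : ℝ :=
  ∑ js : Fin (T + 1) → S,
    (if js t.castSucc = y
      then (pastW init trans (t : ℕ) js * pastE emit d ((t : ℕ) + 1) js)
        * futW trans (t : ℕ) js
      else 0)

variable (init : S → ℝ) (trans : S → S → ℝ) (emit : S → O → ℝ)
    (d : Fin (T + 1) → O) (t : Fin T)

include d in
lemma NumQ_eq (hemit1 : ∀ s, ∑ o : O, emit s o = 1) (x : S) :
    hmmProb T init trans emit (fun js ds => stateAt T t.succ x js ds ∧ obsAll T d js ds)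
      = NumQ init trans emit d t x := by
  rw [hmmProb_congr init trans emit
    (E' := fun js ds => (js t.succ = x) ∧ ∀ i, (fun _ : Fin (T + 1) => True) i → ds i = d i)
    (fun js ds => by simp [stateAt, obsAll])]
  rw [prob_eq_pathSum init trans emit d hemit1 _ _]
  refine Finset.sum_congr rfl fun js _ => ?_
  by_cases h : js t.succ = x
  · rw [if_pos h, if_pos h]
    trans ((init (js 0) * ∏ i : Fin T, trans (js i.castSucc) (js i.succ))
      * ∏ i : Fin (T + 1), emit (js i) (d i))
    · congr 1
      exact Finset.prod_congr rfl fun i _ => if_pos trivial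
    · rw [← E_split emit d ((t : ℕ) + 1) js, W_split init trans ((t : ℕ) + 1) js]
      ring
  · rw [if_neg h, if_neg h]

include d in
lemma MstQ_eq (hemit1 : ∀ s, ∑ o : O, emit s o = 1) (x : S) :
    hmmProb T init trans emit (stateAt T t.succ x) = MstQ init trans t x := by
  rw [hmmProb_congr init trans emit
    (E' := fun js ds => (js t.succ = x) ∧ ∀ i, (fun _ : Fin (T + 1) => False) i → ds i = d i)
    (fun js ds => by simp [stateAt])]
  rw [prob_eq_pathSum init trans emit d hemit1 _ _]
  refine Finset.sum_congr rfl fun js _ => ?_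
  by_cases h : js t.succ = x
  · rw [if_pos h, if_pos h]
    trans ((init (js 0) * ∏ i : Fin T, trans (js i.castSucc) (js i.succ)) * 1)
    · congr 1
      exact Finset.prod_eq_one fun i _ => if_neg fun hc => hc
    · rw [mul_one, W_split init trans ((t : ℕ) + 1) js]
  · rw [if_neg h, if_neg h]

lemma PfutQ_eq (hemit1 : ∀ s, ∑ o : O, emit s o = 1) (x : S) :
    hmmProb T init trans emit (fun js ds => obsGe T t.succ d js ds ∧ stateAt T t.succ x js ds)
      = PfutQ init trans emit d t x := by
  rw [hmmProb_congr init trans emit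
    (E' := fun js ds => (js t.succ = x) ∧ ∀ i, (fun i : Fin (T + 1) => (t : ℕ) + 1 ≤ (i : ℕ)) i → ds i = d i)
    (fun js ds => by
      constructor
      · rintro ⟨h1, h2⟩
        exact ⟨h2, fun i hi => h1 i (by rw [Fin.le_def, Fin.val_succ]; exact hi)⟩
      · rintro ⟨h1, h2⟩
        exact ⟨fun i hi => h2 i (by rw [Fin.le_def, Fin.val_succ] at hi; exact hi), h1⟩)]
  rw [prob_eq_pathSum init trans emit d hemit1 _ _]
  refine Finset.sum_congr rfl fun js _ => ?_
  by_cases h : js t.succ = x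
  · rw [if_pos h, if_pos h]
    trans ((init (js 0) * ∏ i : Fin T, trans (js i.castSucc) (js i.succ))
      * futE emit d ((t : ℕ) + 1) js)
    · congr 1
      refine Finset.prod_congr rfl fun i _ => ?_
      by_cases hc : (t : ℕ) + 1 ≤ (i : ℕ)
      · rw [if_pos hc, if_pos hc]
      · rw [if_neg hc, if_neg hc]
    · rw [W_split init trans ((t : ℕ) + 1) js]
      ring
  · rw [if_neg h, if_neg h]

lemma PpastQ_eq (hemit1 : ∀ s, ∑ o : O, emit s o = 1) (x : S) :
    hmmProb T init trans emit (fun js ds => stateAt T t.succ x js ds ∧ obsLe T t.castSucc d js ds)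
      = PpastQ init trans emit d t x := by
  rw [hmmProb_congr init trans emit
    (E' := fun js ds => (js t.succ = x) ∧ ∀ i, (fun i : Fin (T + 1) => (i : ℕ) < (t : ℕ) + 1) i → ds i = d i)
    (fun js ds => by
      constructor
      · rintro ⟨h1, h2⟩
        exact ⟨h1, fun i hi => h2 i (by rw [Fin.le_def, Fin.coe_castSucc]; omega)⟩
      · rintro ⟨h1, h2⟩
        exact ⟨h1, fun i hi => h2 i (by rw [Fin.le_def, Fin.coe_castSucc] at hi; omega)⟩)]
  rw [prob_eq_pathSum init trans emit d hemit1 _ _]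
  refine Finset.sum_congr rfl fun js _ => ?_
  by_cases h : js t.succ = x
  · rw [if_pos h, if_pos h]
    trans ((init (js 0) * ∏ i : Fin T, trans (js i.castSucc) (js i.succ))
      * pastE emit d ((t : ℕ) + 1) js)
    · congr 1
      refine Finset.prod_congr rfl fun i _ => ?_
      by_cases hc : (i : ℕ) < (t : ℕ) + 1
      · rw [if_pos hc, if_pos hc]
      · rw [if_neg hc, if_neg hc]
    · rw [W_split init trans ((t : ℕ) + 1) js]
      ring
  · rw [if_neg h, if_neg h]

lemma FprevQ_eq (hemit1 : ∀ s, ∑ o : O, emit s o = 1) (y : S) :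
    hmmProb T init trans emit (fun js ds => stateAt T t.castSucc y js ds ∧ obsLe T t.castSucc d js ds)
      = FprevQ init trans emit d t y := by
  rw [hmmProb_congr init trans emit
    (E' := fun js ds => (js t.castSucc = y) ∧ ∀ i, (fun i : Fin (T + 1) => (i : ℕ) < (t : ℕ) + 1) i → ds i = d i)
    (fun js ds => by
      constructor
      · rintro ⟨h1, h2⟩
        exact ⟨h1, fun i hi => h2 i (by rw [Fin.le_def, Fin.coe_castSucc]; omega)⟩
      · rintro ⟨h1, h2⟩
        exact ⟨h1, fun i hi => h2 i (by rw [Fin.le_def, Fin.coe_castSucc] at hi; omega)⟩)]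
  rw [prob_eq_pathSum init trans emit d hemit1 _ _]
  refine Finset.sum_congr rfl fun js _ => ?_
  by_cases h : js t.castSucc = y
  · rw [if_pos h, if_pos h]
    trans ((init (js 0) * ∏ i : Fin T, trans (js i.castSucc) (js i.succ))
      * pastE emit d ((t : ℕ) + 1) js)
    · congr 1
      refine Finset.prod_congr rfl fun i _ => ?_
      by_cases hc : (i : ℕ) < (t : ℕ) + 1
      · rw [if_pos hc, if_pos hc]
      · rw [if_neg hc, if_neg hc]
    · rw [W_split init trans (t : ℕ) js]
      ring
  · rw [if_neg h, if_neg h]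

lemma key4 (x : S) :
    NumQ init trans emit d t x * MstQ init trans t x
      = PpastQ init trans emit d t x * PfutQ init trans emit d t x := by
  have hsv : ((t.succ : Fin (T + 1)) : ℕ) = (t : ℕ) + 1 := Fin.val_succ t
  have hfmeas : ∀ js js' : Fin (T + 1) → S,
      (∀ i : Fin (T + 1), (i : ℕ) ≤ ((t.succ : Fin (T + 1)) : ℕ) → js i = js' i) →
      pastW init trans ((t : ℕ) + 1) js * pastE emit d ((t : ℕ) + 1) js
        = pastW init trans ((t : ℕ) + 1) js' * pastE emit d ((t : ℕ) + 1) js' := by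
    intro js js' h
    have h' : ∀ i : Fin (T + 1), (i : ℕ) ≤ (t : ℕ) + 1 → js i = js' i :=
      fun i hi => h i (by rw [hsv]; exact hi)
    rw [pastW_meas init trans ((t : ℕ) + 1) ((t : ℕ) + 1) le_rfl js js' h',
      pastE_meas emit d ((t : ℕ) + 1) ((t : ℕ) + 1) (by omega) js js' h']
  have hfmeas' : ∀ js js' : Fin (T + 1) → S,
      (∀ i : Fin (T + 1), (i : ℕ) ≤ ((t.succ : Fin (T + 1)) : ℕ) → js i = js' i) →
      pastW init trans ((t : ℕ) + 1) js = pastW init trans ((t : ℕ) + 1) js' := by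
    intro js js' h
    exact pastW_meas init trans ((t : ℕ) + 1) ((t : ℕ) + 1) le_rfl js js'
      (fun i hi => h i (by rw [hsv]; exact hi))
  have hgmeas : ∀ js js' : Fin (T + 1) → S,
      (∀ i : Fin (T + 1), ((t.succ : Fin (T + 1)) : ℕ) ≤ (i : ℕ) → js i = js' i) →
      futW trans ((t : ℕ) + 1) js * futE emit d ((t : ℕ) + 1) js
        = futW trans ((t : ℕ) + 1) js' * futE emit d ((t : ℕ) + 1) js' := by
    intro js js' h
    have h' : ∀ i : Fin (T + 1), (t : ℕ) + 1 ≤ (i : ℕ) → js i = js' i :=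
      fun i hi => h i (by rw [hsv]; exact hi)
    rw [futW_meas trans ((t : ℕ) + 1) ((t : ℕ) + 1) le_rfl js js' h',
      futE_meas emit d ((t : ℕ) + 1) ((t : ℕ) + 1) le_rfl js js' h']
  have hgmeas' : ∀ js js' : Fin (T + 1) → S,
      (∀ i : Fin (T + 1), ((t.succ : Fin (T + 1)) : ℕ) ≤ (i : ℕ) → js i = js' i) →
      futW trans ((t : ℕ) + 1) js = futW trans ((t : ℕ) + 1) js' := by
    intro js js' h
    exact futW_meas trans ((t : ℕ) + 1) ((t : ℕ) + 1) le_rfl js js'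
      (fun i hi => h i (by rw [hsv]; exact hi))
  exact split_pin4 t.succ x
    (fun js => pastW init trans ((t : ℕ) + 1) js * pastE emit d ((t : ℕ) + 1) js)
    (fun js => pastW init trans ((t : ℕ) + 1) js)
    (fun js => futW trans ((t : ℕ) + 1) js * futE emit d ((t : ℕ) + 1) js)
    (fun js => futW trans ((t : ℕ) + 1) js)
    hfmeas hfmeas' hgmeas hgmeas'


lemma Pd_eq (hemit1 : ∀ s, ∑ o : O, emit s o = 1) :
    hmmProb T init trans emit (obsAll T d) = ∑ x : S, NumQ init trans emit d t x := by
  rw [← hmmProb_state_partition init trans emit t.succ (obsAll T d)]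
  exact Finset.sum_congr rfl fun x _ => NumQ_eq init trans emit d t hemit1 x

/-- One-step prediction: decomposing the past mass at `t+1` through the state at `t`. -/
lemma predQ [Nonempty S] (htrans1 : ∀ s : S, ∑ s' : S, trans s s' = 1) (x : S) :
    PpastQ init trans emit d t x
      = ∑ y : S, FprevQ init trans emit d t y * trans y x := by
  classical
  have hcard : (Fintype.card S : ℝ) ≠ 0 := by simp [Fintype.card_ne_zero]
  have htvT : (t : ℕ) < T := t.isLt
  have hcs : (⟨(t : ℕ), by omega⟩ : Fin (T + 1)) = t.castSucc := by
    apply Fin.ext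
    simp
  have hsc : (⟨(t : ℕ) + 1, by omega⟩ : Fin (T + 1)) = t.succ := by
    apply Fin.ext
    simp
  have hrv : ((t.castSucc : Fin (T + 1)) : ℕ) = (t : ℕ) := Fin.coe_castSucc t
  have hsv : ((t.succ : Fin (T + 1)) : ℕ) = (t : ℕ) + 1 := Fin.val_succ t
  -- pointwise decomposition of the summand
  have hpt : ∀ js : Fin (T + 1) → S,
      (if js t.succ = x
        then (pastW init trans ((t : ℕ) + 1) js * pastE emit d ((t : ℕ) + 1) js)
          * futW trans ((t : ℕ) + 1) js
        else 0)
      = ∑ y : S, (if js t.castSucc = y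
          then (pastW init trans (t : ℕ) js * pastE emit d ((t : ℕ) + 1) js)
            * (if js t.succ = x then futW trans (t : ℕ) js else 0)
          else 0) := by
    intro js
    rw [Finset.sum_ite_eq univ (js t.castSucc)
      (fun _ => (pastW init trans (t : ℕ) js * pastE emit d ((t : ℕ) + 1) js)
        * (if js t.succ = x then futW trans (t : ℕ) js else 0)),
      if_pos (Finset.mem_univ _)]
    by_cases h : js t.succ = x
    · rw [if_pos h, if_pos h]
      have e1 := pastW_succ init trans (t : ℕ) htvT js
      have e2 := futW_split trans (t : ℕ) htvT js
      rw [hcs, hsc] at e1 e2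
      rw [e1, e2]
      ring
    · rw [if_neg h, if_neg h, mul_zero]
  unfold PpastQ
  rw [Finset.sum_congr rfl fun js _ => hpt js, Finset.sum_comm]
  refine Finset.sum_congr rfl fun y _ => ?_
  -- measurability facts for the split at `t.castSucc`
  have hmf : ∀ js js' : Fin (T + 1) → S,
      (∀ i : Fin (T + 1), (i : ℕ) ≤ ((t.castSucc : Fin (T + 1)) : ℕ) → js i = js' i) →
      pastW init trans (t : ℕ) js * pastE emit d ((t : ℕ) + 1) js
        = pastW init trans (t : ℕ) js' * pastE emit d ((t : ℕ) + 1) js' := by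
    intro js js' h
    have h' : ∀ i : Fin (T + 1), (i : ℕ) ≤ (t : ℕ) → js i = js' i :=
      fun i hi => h i (by rw [hrv]; exact hi)
    rw [pastW_meas init trans (t : ℕ) (t : ℕ) le_rfl js js' h',
      pastE_meas emit d ((t : ℕ) + 1) (t : ℕ) (by omega) js js' h']
  have hm1 : ∀ js js' : Fin (T + 1) → S,
      (∀ i : Fin (T + 1), (i : ℕ) ≤ ((t.castSucc : Fin (T + 1)) : ℕ) → js i = js' i) →
      (fun _ : Fin (T + 1) → S => (1 : ℝ)) js = (fun _ : Fin (T + 1) → S => (1 : ℝ)) js' :=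
    fun _ _ _ => rfl
  have hmgX : ∀ js js' : Fin (T + 1) → S,
      (∀ i : Fin (T + 1), ((t.castSucc : Fin (T + 1)) : ℕ) ≤ (i : ℕ) → js i = js' i) →
      (if js t.succ = x then futW trans (t : ℕ) js else 0)
        = (if js' t.succ = x then futW trans (t : ℕ) js' else 0) := by
    intro js js' h
    have h' : ∀ i : Fin (T + 1), (t : ℕ) ≤ (i : ℕ) → js i = js' i :=
      fun i hi => h i (by rw [hrv]; exact hi)
    have hts : js t.succ = js' t.succ := h' t.succ (by rw [hsv]; omega)
    rw [hts, futW_meas trans (t : ℕ) (t : ℕ) le_rfl js js' h']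
  have hmg2 : ∀ js js' : Fin (T + 1) → S,
      (∀ i : Fin (T + 1), ((t.castSucc : Fin (T + 1)) : ℕ) ≤ (i : ℕ) → js i = js' i) →
      futW trans (t : ℕ) js = futW trans (t : ℕ) js' := by
    intro js js' h
    exact futW_meas trans (t : ℕ) (t : ℕ) le_rfl js js'
      (fun i hi => h i (by rw [hrv]; exact hi))
  have hkey := split_pin4 t.castSucc y
    (fun js => pastW init trans (t : ℕ) js * pastE emit d ((t : ℕ) + 1) js)
    (fun _ => (1 : ℝ))
    (fun js => (if js t.succ = x then futW trans (t : ℕ) js else 0))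
    (fun js => futW trans (t : ℕ) js)
    hmf hm1 hmgX hmg2
  simp only [one_mul] at hkey
  -- value of the plain future mass
  have htl1 : ∑ js : Fin (T + 1) → S,
      (if js t.castSucc = y then futW trans (t : ℕ) js else 0)
      = (Fintype.card S : ℝ) ^ (t : ℕ) := by
    have h := tel (T := T) trans htrans1 (T - (t : ℕ)) (t : ℕ) (by omega) y
    rw [hcs] at h
    exact h
  -- value of the future mass additionally pinned at `t+1`
  have htl2 : ∑ js : Fin (T + 1) → S,
      (if js t.castSucc = y then (if js t.succ = x then futW trans (t : ℕ) js else 0) else 0)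
      = trans y x * (Fintype.card S : ℝ) ^ (t : ℕ) := by
    have hp2 : ∀ js : Fin (T + 1) → S,
        (if js t.castSucc = y then (if js t.succ = x then futW trans (t : ℕ) js else 0) else 0)
        = trans y x * (if js t.castSucc = y
            then (if js t.succ = x then futW trans ((t : ℕ) + 1) js else 0) else 0) := by
      intro js
      by_cases h1 : js t.castSucc = y
      · by_cases h2 : js t.succ = x
        · rw [if_pos h1, if_pos h2, if_pos h1, if_pos h2]
          have e2 := futW_split trans (t : ℕ) htvT js
          rw [hcs, hsc] at e2
          rw [e2, h1, h2]
        · simp [h1, h2]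
      · simp [h1]
    rw [Finset.sum_congr rfl fun js _ => hp2 js, ← Finset.mul_sum]
    congr 1
    have hFind : ∀ (js : Fin (T + 1) → S) (z : S),
        (fun js : Fin (T + 1) → S =>
          (if js t.succ = x then futW trans ((t : ℕ) + 1) js else 0))
            (Function.update js t.castSucc z)
          = (fun js : Fin (T + 1) → S =>
              (if js t.succ = x then futW trans ((t : ℕ) + 1) js else 0)) js := by
      intro js z
      simp only
      have hne : (t.succ : Fin (T + 1)) ≠ t.castSucc := by
        intro hc
        have := congrArg Fin.val hc
        rw [hsv, hrv] at this
        omega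
      rw [Function.update_of_ne hne _ _]
      by_cases h2 : js t.succ = x
      · rw [if_pos h2, if_pos h2]
        refine futW_meas trans ((t : ℕ) + 1) ((t : ℕ) + 1) le_rfl _ _ (fun i hi => ?_)
        refine Function.update_of_ne ?_ _ _
        intro hc
        have := congrArg Fin.val hc
        rw [hrv] at this
        omega
      · rw [if_neg h2, if_neg h2]
    have hps := pin_sum_card t.castSucc
      (fun js : Fin (T + 1) → S =>
        (if js t.succ = x then futW trans ((t : ℕ) + 1) js else 0)) hFind y
    have htl3 : ∑ js : Fin (T + 1) → S,
        (if js t.succ = x then futW trans ((t : ℕ) + 1) js else 0)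
        = (Fintype.card S : ℝ) ^ ((t : ℕ) + 1) := by
      have h := tel (T := T) trans htrans1 (T - ((t : ℕ) + 1)) ((t : ℕ) + 1) (by omega) x
      rw [hsc] at h
      exact h
    rw [htl3] at hps
    have hp4 : (Fintype.card S : ℝ) ^ ((t : ℕ) + 1)
        = (Fintype.card S : ℝ) * (Fintype.card S : ℝ) ^ (t : ℕ) := by ring
    rw [hp4] at hps
    exact mul_left_cancel₀ hcard hps
  rw [htl1, htl2] at hkey
  apply mul_right_cancel₀ (pow_ne_zero (t : ℕ) hcard)
  rw [hkey]
  unfold FprevQ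
  ring

end TFBridge

/-- Exact-weighting version of the two-filter smoother weight formula: if the filtering
distribution at time `t-1` and the backward distribution `p̃` at time `t` are exactly
represented by weighted empirical measures with distinct atoms, then the reweighted atoms
of the backward filter recover the smoothing distribution, which vanishes off those atoms. -/
theorem two_filter_smoother_weights {S O : Type} [Fintype S] [Fintype O] (T : ℕ)
    (init : S → ℝ) (trans : S → S → ℝ) (emit : S → O → ℝ)
    (hinit0 : ∀ s, 0 ≤ init s) (hinit1 : ∑ s : S, init s = 1)
    (htrans0 : ∀ s s', 0 ≤ trans s s') (htrans1 : ∀ s, ∑ s' : S, trans s s' = 1)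
    (hemit0 : ∀ s o, 0 ≤ emit s o) (hemit1 : ∀ s, ∑ o : O, emit s o = 1)
    (γ : Fin (T + 1) → S → ℝ) (hγ : ∀ t x, 0 < γ t x)
    (d : Fin (T + 1) → O) (t : Fin T)
    (hall : hmmProb T init trans emit (obsAll T d) > 0)
    (hpast : hmmProb T init trans emit (obsLe T t.castSucc d) > 0)
    (hstates : ∀ y : S, hmmProb T init trans emit (stateAt T t.succ y) > 0)
    (hN : ∑ y : S, backF T init trans emit d t.succ y * γ t.succ y > 0)
    (K K' : ℕ) (ja : Fin K → S) (hja : Function.Injective ja) (w : Fin K → ℝ)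
    (hw0 : ∀ k, 0 ≤ w k) (hw1 : ∑ k, w k = 1)
    (jb : Fin K' → S) (hjb : Function.Injective jb) (wb : Fin K' → ℝ)
    (hwb0 : ∀ l, 0 ≤ wb l) (hwb1 : ∑ l, wb l = 1)
    (hfilt : ∀ x : S,
      hmmCond T init trans emit (stateAt T t.castSucc x) (obsLe T t.castSucc d) =
        ∑ k, if x = ja k then w k else 0)
    (hback : ∀ x : S, ptilde T init trans emit γ d t.succ x =
        ∑ l, if x = jb l then wb l else 0)
    (hZ : ∑ l', wb l' * ∑ k, w k * (trans (ja k) (jb l') / γ t.succ (jb l')) > 0) :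
    (∀ l : Fin K',
      hmmCond T init trans emit (stateAt T t.succ (jb l)) (obsAll T d) =
        (wb l * ∑ k, w k * (trans (ja k) (jb l) / γ t.succ (jb l))) /
          ∑ l', wb l' * ∑ k, w k * (trans (ja k) (jb l') / γ t.succ (jb l'))) ∧
    ∀ x : S, (∀ l, x ≠ jb l) →
      hmmCond T init trans emit (stateAt T t.succ x) (obsAll T d) = 0  := by
  classical
  have hS : Nonempty S := by
    by_contra h
    rw [not_nonempty_iff] at h
    haveI : IsEmpty (Fin (T + 1) → S) := ⟨fun f => h.false (f 0)⟩
    unfold hmmProb at hall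
    rw [Finset.univ_eq_empty, Finset.sum_empty] at hall
    exact lt_irrefl 0 hall
  have hcard : (Fintype.card S : ℝ) ≠ 0 := by simp [Fintype.card_ne_zero]
  have hNum : ∀ x : S,
      hmmProb T init trans emit (fun js ds => stateAt T t.succ x js ds ∧ obsAll T d js ds)
        = TFBridge.NumQ init trans emit d t x :=
    TFBridge.NumQ_eq init trans emit d t hemit1
  have hMst : ∀ x : S, hmmProb T init trans emit (stateAt T t.succ x)
      = TFBridge.MstQ init trans t x :=
    TFBridge.MstQ_eq init trans emit d t hemit1
  have hPfut : ∀ x : S,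
      hmmProb T init trans emit (fun js ds => obsGe T t.succ d js ds ∧ stateAt T t.succ x js ds)
        = TFBridge.PfutQ init trans emit d t x :=
    TFBridge.PfutQ_eq init trans emit d t hemit1
  have hFprevE : ∀ y : S,
      hmmProb T init trans emit
        (fun js ds => stateAt T t.castSucc y js ds ∧ obsLe T t.castSucc d js ds)
        = TFBridge.FprevQ init trans emit d t y :=
    TFBridge.FprevQ_eq init trans emit d t hemit1
  have hPdE : hmmProb T init trans emit (obsAll T d)
      = ∑ x : S, TFBridge.NumQ init trans emit d t x :=
    TFBridge.Pd_eq init trans emit d t hemit1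
  have hMstpos : ∀ x : S, 0 < TFBridge.MstQ init trans t x :=
    fun x => (hMst x) ▸ (hstates x)
  -- the filtering weights
  have hFw : ∀ y : S, TFBridge.FprevQ init trans emit d t y
      = hmmProb T init trans emit (obsLe T t.castSucc d) * (∑ k, if y = ja k then w k else 0) := by
    intro y
    have h1 := hfilt y
    unfold hmmCond at h1
    rw [hFprevE y] at h1
    rw [← h1]
    field_simp
  -- one-step prediction in terms of the particle weights
  have hPpastVal : ∀ x : S, TFBridge.PpastQ init trans emit d t x
      = hmmProb T init trans emit (obsLe T t.castSucc d) * ∑ k, w k * trans (ja k) x := by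
    intro x
    rw [TFBridge.predQ init trans emit d t htrans1 x]
    rw [Finset.sum_congr rfl fun y _ => by rw [hFw y]]
    have hpt : ∀ y : S,
        (hmmProb T init trans emit (obsLe T t.castSucc d) * (∑ k, if y = ja k then w k else 0))
            * trans y x
        = hmmProb T init trans emit (obsLe T t.castSucc d)
            * ∑ k, (if y = ja k then w k * trans y x else 0) := by
      intro y
      rw [mul_assoc]
      congr 1
      rw [Finset.sum_mul]
      refine Finset.sum_congr rfl fun k _ => ?_
      by_cases h : y = ja k <;> simp [h]
    rw [Finset.sum_congr rfl fun y _ => hpt y, ← Finset.mul_sum]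
    congr 1
    rw [Finset.sum_comm]
    refine Finset.sum_congr rfl fun k _ => ?_
    rw [Finset.sum_ite_eq' univ (ja k) (fun y => w k * trans y x)]
    simp
  -- the backward filter in terms of the particle weights
  have hBack : ∀ x : S, TFBridge.PfutQ init trans emit d t x / TFBridge.MstQ init trans t x
      = (∑ y : S, backF T init trans emit d t.succ y * γ t.succ y)
        * (∑ l, if x = jb l then wb l else 0) / γ t.succ x := by
    intro x
    have hbF : backF T init trans emit d t.succ x
        = TFBridge.PfutQ init trans emit d t x / TFBridge.MstQ init trans t x := by
      unfold backF hmmCond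
      rw [hPfut x, hMst x]
    have h1 := hback x
    unfold ptilde at h1
    rw [div_eq_iff (ne_of_gt hN)] at h1
    rw [← hbF, eq_div_iff (ne_of_gt (hγ t.succ x)), h1]
    ring
  -- closed form of the smoothing numerator
  have hNumVal : ∀ x : S, TFBridge.NumQ init trans emit d t x
      = hmmProb T init trans emit (obsLe T t.castSucc d)
        * (∑ k, w k * trans (ja k) x)
        * ((∑ y : S, backF T init trans emit d t.succ y * γ t.succ y)
            * (∑ l, if x = jb l then wb l else 0) / γ t.succ x) := by
    intro x
    have h4 := TFBridge.key4 init trans emit d t x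
    have hMne : TFBridge.MstQ init trans t x ≠ 0 := ne_of_gt (hMstpos x)
    have h5 : TFBridge.NumQ init trans emit d t x
        = TFBridge.PpastQ init trans emit d t x
          * (TFBridge.PfutQ init trans emit d t x / TFBridge.MstQ init trans t x) := by
      rw [mul_div_assoc'] at *
      rw [eq_div_iff hMne]
      exact h4
    rw [h5, hBack x, hPpastVal x]
  -- closed form of the evidence
  have hPdVal : hmmProb T init trans emit (obsAll T d)
      = hmmProb T init trans emit (obsLe T t.castSucc d)
        * (∑ y : S, backF T init trans emit d t.succ y * γ t.succ y)
        * ∑ l', wb l' * ∑ k, w k * (trans (ja k) (jb l') / γ t.succ (jb l')) := by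
    rw [hPdE, Finset.sum_congr rfl fun x _ => hNumVal x]
    have hpt : ∀ x : S,
        hmmProb T init trans emit (obsLe T t.castSucc d)
          * (∑ k, w k * trans (ja k) x)
          * ((∑ y : S, backF T init trans emit d t.succ y * γ t.succ y)
              * (∑ l, if x = jb l then wb l else 0) / γ t.succ x)
        = hmmProb T init trans emit (obsLe T t.castSucc d)
            * (∑ y : S, backF T init trans emit d t.succ y * γ t.succ y)
            * ∑ l, (if x = jb l
                then wb l * ((∑ k, w k * trans (ja k) x) / γ t.succ x) else 0) := by
      intro x
      have h6 : (∑ l, if x = jb l then wb l else 0)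
            * ((∑ k, w k * trans (ja k) x) / γ t.succ x)
          = ∑ l, (if x = jb l
              then wb l * ((∑ k, w k * trans (ja k) x) / γ t.succ x) else 0) := by
        rw [Finset.sum_mul]
        refine Finset.sum_congr rfl fun l _ => ?_
        by_cases h : x = jb l <;> simp [h]
      rw [← h6]
      ring
    rw [Finset.sum_congr rfl fun x _ => hpt x, ← Finset.mul_sum]
    congr 1
    rw [Finset.sum_comm]
    refine Finset.sum_congr rfl fun l _ => ?_
    rw [Finset.sum_ite_eq' univ (jb l)
      (fun x => wb l * ((∑ k, w k * trans (ja k) x) / γ t.succ x))]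
    simp only [Finset.mem_univ, if_pos]
    congr 1
    rw [Finset.sum_div]
    exact Finset.sum_congr rfl fun k _ => (mul_div_assoc _ _ _)
  have hPN : hmmProb T init trans emit (obsLe T t.castSucc d)
      * (∑ y : S, backF T init trans emit d t.succ y * γ t.succ y) ≠ 0 :=
    mul_ne_zero (ne_of_gt hpast) (ne_of_gt hN)
  constructor
  · intro l
    unfold hmmCond
    rw [hNum (jb l), hPdVal, hNumVal (jb l)]
    have hψl : (∑ l', if jb l = jb l' then wb l' else 0) = wb l := by
      rw [Finset.sum_eq_single l]
      · simp
      · intro l' _ hne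
        exact if_neg fun hc => hne (hjb hc).symm
      · intro hnm
        exact absurd (Finset.mem_univ l) hnm
    rw [hψl]
    have hnum2 : hmmProb T init trans emit (obsLe T t.castSucc d)
        * (∑ k, w k * trans (ja k) (jb l))
        * ((∑ y : S, backF T init trans emit d t.succ y * γ t.succ y)
            * wb l / γ t.succ (jb l))
        = (hmmProb T init trans emit (obsLe T t.castSucc d)
            * (∑ y : S, backF T init trans emit d t.succ y * γ t.succ y))
          * (wb l * ∑ k, w k * (trans (ja k) (jb l) / γ t.succ (jb l))) := by
      have h7 : (∑ k, w k * (trans (ja k) (jb l) / γ t.succ (jb l)))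
          = (∑ k, w k * trans (ja k) (jb l)) / γ t.succ (jb l) := by
        rw [Finset.sum_div]
        exact Finset.sum_congr rfl fun k _ => (mul_div_assoc _ _ _).symm
      rw [h7]
      ring
    rw [hnum2]
    exact mul_div_mul_left _ _ hPN
  · intro x hx
    unfold hmmCond
    rw [hNum x, hNumVal x]
    have hz : (∑ l, if x = jb l then wb l else 0) = 0 :=
      Finset.sum_eq_zero fun l _ => if_neg (hx l)
    rw [hz]
    simp
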